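/- arXiv:2012.07780 — 4 statements merged into one kernel-verified Lean document; each statement's English description precedes it below -/
import Mathlib

section
/- Let (K̄, ν̄) be an algebraically closed valued field, a ∈ K̄, δ in the value group Φ(ν̄), and D = D(a, δ) = {x ∈ K̄ : ν̄(x - a) ≥ δ} the closed ball. For any polynomial f ∈ K̄[X], the minimum min_{x ∈ D} ν̄(f(x)) exists and equals min_{i ∈ ℕ} (ν̄(∂_i f(a)) + i·δ). In particular f ↦ min_{x∈D} ν̄(f(x)) is a valuation on K̄[X] coinciding with ν̄_{a,δ}. -/
open Polynomial

/-- An additive (Krull) valuation with values in `Γ ∪ {∞}`. -/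
structure IsValAdd {R : Type*} [CommRing R] {Γ : Type*} [AddCommGroup Γ] [LinearOrder Γ] [IsOrderedAddMonoid Γ]
    (v : R → WithTop Γ) : Prop where
  map_mul : ∀ a b, v (a * b) = v a + v b
  map_add : ∀ a b, min (v a) (v b) ≤ v (a + b)
  map_one : v 1 = 0
  map_zero : v 0 = ⊤
  supp : ∀ a, v a = ⊤ → a = 0

/-- The valuation associated to a pair `(a, δ)`:
`ν_{a,δ}(∑ aᵢ (X - a)ⁱ) = min_i (ν aᵢ + i•δ)`. -/
noncomputable def pairVal {K : Type*} [Field K] {Γ : Type*} [AddCommGroup Γ] [LinearOrder Γ] [IsOrderedAddMonoid Γ]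
    (ν : K → WithTop Γ) (a : K) (δ : Γ) (f : K[X]) : WithTop Γ :=
  (Finset.range (f.natDegree + 1)).inf
    fun i => ν ((Polynomial.taylor a f).coeff i) + ((i • δ : Γ) : WithTop Γ)

/-- The coefficients of the `Q`-expansion of a polynomial, by iterated euclidean division. -/
noncomputable def qCoeff {K : Type*} [Field K] (Q : K[X]) : ℕ → K[X] → K[X]
  | 0, f => f %ₘ Q
  | n + 1, f => qCoeff Q n (f /ₘ Q)

/-- The truncation `μ_Q` of `μ` along `Q` : `μ_Q(f) = min_i μ(fᵢ Qⁱ)` over the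
`Q`-expansion `f = ∑ fᵢ Qⁱ`. -/
noncomputable def trunc {K : Type*} [Field K] {Γ : Type*} [AddCommGroup Γ] [LinearOrder Γ] [IsOrderedAddMonoid Γ]
    (μ : K[X] → WithTop Γ) (Q : K[X]) (f : K[X]) : WithTop Γ :=
  (Finset.range (f.natDegree + 1)).inf fun i => μ (qCoeff Q i f * Q ^ i)

/-- `ε_μ(f) < ε_μ(Q)`, stated in cross-multiplied form (valid in the divisible hull). -/
def EpsLt {K : Type*} [Field K] {Γ : Type*} [AddCommGroup Γ] [LinearOrder Γ] [IsOrderedAddMonoid Γ]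
    (μ : K[X] → WithTop Γ) (f Q : K[X]) : Prop :=
  ∃ j, 1 ≤ j ∧ μ (hasseDeriv j Q) ≠ ⊤ ∧
    ∀ i, 1 ≤ i → j • μ f + i • μ (hasseDeriv j Q) < i • μ Q + j • μ (hasseDeriv i f)

/-- `ε_{μ₁}(f) ≤ ε_{μ₂}(g)`, stated in cross-multiplied form. -/
def EpsLE {K L : Type*} [Field K] [Field L] {Γ : Type*} [AddCommGroup Γ] [LinearOrder Γ] [IsOrderedAddMonoid Γ]
    (μ₁ : K[X] → WithTop Γ) (f : K[X]) (μ₂ : L[X] → WithTop Γ) (g : L[X]) : Prop :=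
  ∀ i, 1 ≤ i → ∃ j, 1 ≤ j ∧
    j • μ₁ f + i • μ₂ (hasseDeriv j g) ≤ i • μ₂ g + j • μ₁ (hasseDeriv i f)

/-- `Q` is an abstract key polynomial for `μ`. -/
def IsABKP {K : Type*} [Field K] {Γ : Type*} [AddCommGroup Γ] [LinearOrder Γ] [IsOrderedAddMonoid Γ]
    (μ : K[X] → WithTop Γ) (Q : K[X]) : Prop :=
  Q.Monic ∧ ∀ f : K[X], f ≠ 0 → f.degree < Q.degree → EpsLt μ f Q

/-!
Pick `b` with `ν b = δ`. The substitution `X ↦ b X + a` maps the unit ball `0 ≤ ν t` onto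
`D(a, δ)` and turns `ν_{a,δ}` into the Gauss valuation `min_i ν (gᵢ)` of `g = f (b X + a)`, which
bounds `ν (g t)` from below on the unit ball. The bound is attained at any integral `t` whose
residue avoids the residues of the integral roots of `g`; such a `t` exists because the field is
algebraically closed. Indeed, writing `g = c ∏ (X - r)`, one has
`ν (g t) = ν c + ∑ min 0 (ν r)`, and the right-hand side bounds every coefficient of `g` from
below. Evaluating at a point that is generic for the roots of two polynomials at once shows that
the Gauss valuation, hence also `ν_{a,δ}`, is multiplicative.
-/

theorem IsValAdd.exists_addValuation {R Γ : Type*} [CommRing R] [AddCommGroup Γ] [LinearOrder Γ]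
    [IsOrderedAddMonoid Γ] {ν : R → WithTop Γ} (hν : IsValAdd ν) :
    ∃ v : AddValuation R (WithTop Γ), ⇑v = ν :=
  ⟨AddValuation.of ν hν.map_zero hν.map_one hν.map_add hν.map_mul, rfl⟩

theorem IsValAdd.comp_injective {R S Γ : Type*} [CommRing R] [CommRing S] [AddCommGroup Γ]
    [LinearOrder Γ] [IsOrderedAddMonoid Γ] {w : S → WithTop Γ} (hw : IsValAdd w) (φ : R →+* S)
    (hφ : Function.Injective φ) : IsValAdd (w ∘ φ) where
  map_mul a b := by simp only [Function.comp_apply, φ.map_mul, hw.map_mul]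
  map_add a b := by simpa only [Function.comp_apply, φ.map_add] using hw.map_add (φ a) (φ b)
  map_one := by simp only [Function.comp_apply, φ.map_one, hw.map_one]
  map_zero := by simp only [Function.comp_apply, φ.map_zero, hw.map_zero]
  supp a ha := hφ (by rw [hw.supp _ ha, φ.map_zero])

theorem AddValuation.map_multiset_prod {R Γ₀ : Type*} [CommRing R]
    [LinearOrderedAddCommMonoidWithTop Γ₀] (v : AddValuation R Γ₀) (M : Multiset R) :
    v M.prod = (M.map v).sum := by
  induction M using Multiset.induction_on with
  | empty => simp
  | cons r M ih => rw [Multiset.prod_cons, v.map_mul, ih, Multiset.map_cons, Multiset.sum_cons]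

section Gauss

variable {R Γ₀ : Type*} [CommRing R] [LinearOrderedAddCommMonoidWithTop Γ₀] (v : AddValuation R Γ₀)

noncomputable def gaussVal (g : R[X]) : Γ₀ :=
  g.support.inf fun i => v (g.coeff i)

theorem le_gaussVal_iff {γ : Γ₀} {g : R[X]} : γ ≤ gaussVal v g ↔ ∀ i, γ ≤ v (g.coeff i) := by
  simp only [gaussVal, Finset.le_inf_iff, mem_support_iff]
  refine ⟨fun h i => ?_, fun h i _ => h i⟩
  by_cases hi : g.coeff i = 0
  · simp [hi]
  · exact h i hi

theorem gaussVal_le_map_coeff (g : R[X]) (i : ℕ) : gaussVal v g ≤ v (g.coeff i) :=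
  (le_gaussVal_iff v).1 le_rfl i

@[simp]
theorem gaussVal_zero : gaussVal v (0 : R[X]) = ⊤ := by
  simp [gaussVal]

@[simp]
theorem gaussVal_C (c : R) : gaussVal v (C c) = v c := by
  by_cases hc : c = 0
  · simp [hc]
  · simp [gaussVal, support_C hc]

@[simp]
theorem gaussVal_one : gaussVal v (1 : R[X]) = 0 := by
  simpa using gaussVal_C v 1

theorem gaussVal_le_map_eval (g : R[X]) {t : R} (ht : 0 ≤ v t) : gaussVal v g ≤ v (g.eval t) := by
  rw [eval_eq_sum]
  refine v.map_le_sum fun i _ => ?_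
  rw [v.map_mul, v.map_pow]
  exact le_add_of_le_of_nonneg (gaussVal_le_map_coeff v g i) (nsmul_nonneg ht i)

theorem gaussVal_add_le_gaussVal_mul (f g : R[X]) :
    gaussVal v f + gaussVal v g ≤ gaussVal v (f * g) := by
  refine (le_gaussVal_iff v).2 fun n => ?_
  rw [coeff_mul]
  refine v.map_le_sum fun x _ => ?_
  rw [v.map_mul]
  exact add_le_add (gaussVal_le_map_coeff v f _) (gaussVal_le_map_coeff v g _)

theorem min_gaussVal_le_gaussVal_add (f g : R[X]) :
    min (gaussVal v f) (gaussVal v g) ≤ gaussVal v (f + g) := by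
  refine (le_gaussVal_iff v).2 fun n => ?_
  rw [coeff_add]
  exact v.map_le_add (min_le_of_left_le (gaussVal_le_map_coeff v f n))
    (min_le_of_right_le (gaussVal_le_map_coeff v g n))

theorem min_le_gaussVal_X_sub_C (r : R) : min 0 (v r) ≤ gaussVal v (X - C r) := by
  refine (le_gaussVal_iff v).2 fun n => ?_
  rw [coeff_sub, coeff_X, coeff_C]
  refine v.map_le_sub ?_ ?_ <;> split_ifs <;> simp

theorem sum_le_gaussVal_prod_X_sub_C (M : Multiset R) :
    (M.map fun r => min 0 (v r)).sum ≤ gaussVal v (M.map fun r => X - C r).prod := by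
  induction M using Multiset.induction_on with
  | empty => simp
  | cons r M ih =>
    simp only [Multiset.map_cons, Multiset.sum_cons, Multiset.prod_cons]
    exact (add_le_add (min_le_gaussVal_X_sub_C v r) ih).trans (gaussVal_add_le_gaussVal_mul v _ _)

end Gauss

section Field

variable {K Γ : Type*} [Field K] [AddCommGroup Γ] [LinearOrder Γ] [IsOrderedAddMonoid Γ]
  (v : AddValuation K (WithTop Γ))

theorem gaussVal_eq_top_iff {g : K[X]} : gaussVal v g = ⊤ ↔ g = 0 := by
  refine ⟨fun h => ext fun i => ?_, fun h => h ▸ gaussVal_zero v⟩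
  rw [coeff_zero, ← v.top_iff]
  exact top_le_iff.1 (h ▸ gaussVal_le_map_coeff v g i)

theorem nonneg_of_isRoot_of_monic {p : K[X]} (hp : p.Monic) (hc : ∀ i, 0 ≤ v (p.coeff i)) {t : K}
    (ht : p.IsRoot t) : 0 ≤ v t := by
  by_contra! hneg
  obtain ⟨γ, hγ⟩ : ∃ γ : Γ, v t = γ := Option.ne_none_iff_exists'.1 (hneg.trans_le le_top).ne
  have hγ0 : γ < 0 := by exact_mod_cast hγ ▸ hneg
  rw [IsRoot, eval_eq_sum_range, Finset.sum_range_succ, hp.coeff_natDegree, one_mul,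
    add_eq_zero_iff_neg_eq] at ht
  -- the leading term `t ^ n` has strictly smaller value than every other term
  have key : v (t ^ p.natDegree) < v (∑ i ∈ Finset.range p.natDegree, p.coeff i * t ^ i) := by
    rw [v.map_pow, hγ, ← WithTop.coe_nsmul]
    refine v.map_lt_sum WithTop.coe_ne_top fun i hi => ?_
    rw [v.map_mul, v.map_pow, hγ, ← WithTop.coe_nsmul]
    refine lt_add_of_nonneg_of_lt (hc i) (WithTop.coe_lt_coe.2 ?_)
    have := nsmul_lt_nsmul_left (neg_pos.2 hγ0) (Finset.mem_range.1 hi)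
    rwa [smul_neg, smul_neg, neg_lt_neg_iff] at this
  rw [← ht, v.map_neg] at key
  exact lt_irrefl _ key

/-- The witness is a root `t` of `∏ (X - r) - 1`, the product running over `0` and the integral
`r ∈ M`: then `t` is integral, and the integral factors `t - r` multiply to `1`, so they are units. -/
theorem exists_nonneg_map_sub_eq_min [IsAlgClosed K] (M : Multiset K) :
    ∃ t, 0 ≤ v t ∧ ∀ r ∈ M, v (t - r) = min 0 (v r) := by
  classical
  set N := 0 ::ₘ M.filter fun r => 0 ≤ v r
  have hN : ∀ r ∈ N, 0 ≤ v r := by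
    simp only [N, Multiset.mem_cons, Multiset.mem_filter]
    rintro r (rfl | ⟨-, hr⟩)
    · simp
    · exact hr
  set Q := (N.map fun r => X - C r).prod
  have hQ : 0 ≤ gaussVal v Q := by
    refine (Multiset.sum_eq_zero fun x hx => ?_).symm.le.trans (sum_le_gaussVal_prod_X_sub_C v N)
    obtain ⟨r, hr, rfl⟩ := Multiset.mem_map.1 hx
    exact min_eq_left (hN r hr)
  have hQmonic : Q.Monic := monic_multiset_prod_of_monic _ _ fun r _ => monic_X_sub_C r
  have hQdeg : 0 < Q.degree := by
    rw [degree_eq_natDegree hQmonic.ne_zero, natDegree_multiset_prod_X_sub_C_eq_card,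
      Multiset.card_cons]
    exact_mod_cast Nat.succ_pos _
  obtain ⟨t, ht⟩ := IsAlgClosed.exists_root (Q - C 1) (by rw [degree_sub_C hQdeg]; exact hQdeg.ne')
  have hQt : Q.eval t = 1 := by simpa [sub_eq_zero] using ht
  have ht0 : 0 ≤ v t := by
    refine nonneg_of_isRoot_of_monic v (hQmonic.sub_of_left (by rwa [degree_C one_ne_zero]))
      (fun i => ?_) ht
    refine (le_gaussVal_iff v).1 ?_ i
    rw [sub_eq_add_neg, ← C_neg]
    refine le_trans (le_min hQ ?_) (min_gaussVal_le_gaussVal_add v _ _)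
    rw [gaussVal_C, v.map_neg, v.map_one]
  have hsum : (N.map fun r => v (t - r)).sum = 0 := by
    rw [← v.map_one, ← hQt, eval_multiset_prod, v.map_multiset_prod, Multiset.map_map,
      Multiset.map_map]
    simp [Function.comp_def]
  have hfactor : ∀ r ∈ N, v (t - r) = 0 := fun r hr =>
    le_antisymm (hsum ▸ Multiset.single_le_sum (fun _ hx => by
      obtain ⟨r', hr', rfl⟩ := Multiset.mem_map.1 hx
      exact v.map_le_sub ht0 (hN r' hr')) _ (Multiset.mem_map_of_mem _ hr))
      (v.map_le_sub ht0 (hN r hr))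
  refine ⟨t, ht0, fun r hr => ?_⟩
  rcases le_or_gt 0 (v r) with hr0 | hr0
  · rw [hfactor r (Multiset.mem_cons_of_mem (Multiset.mem_filter.2 ⟨hr, hr0⟩)), min_eq_left hr0]
  · rw [v.map_sub_eq_of_lt_right (hr0.trans_le ht0), min_eq_right hr0.le]

theorem map_eval_eq_gaussVal {f : K[X]} (hf : f.Splits) {t : K} (ht : 0 ≤ v t)
    (hroots : ∀ r ∈ f.roots, v (t - r) = min 0 (v r)) : v (f.eval t) = gaussVal v f := by
  refine le_antisymm ?_ (gaussVal_le_map_eval v f ht)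
  have hf' := hf.eq_prod_roots
  calc v (f.eval t) = v f.leadingCoeff + (f.roots.map fun r => min 0 (v r)).sum := by
        conv_lhs => rw [hf']
        rw [eval_mul, eval_C, v.map_mul, eval_multiset_prod, v.map_multiset_prod,
          Multiset.map_map, Multiset.map_map]
        congr 1
        exact congrArg _ (Multiset.map_congr rfl fun r hr => by simp [hroots r hr])
    _ ≤ gaussVal v (C f.leadingCoeff) + gaussVal v (f.roots.map fun r => X - C r).prod := by
        rw [gaussVal_C]
        exact add_le_add le_rfl (sum_le_gaussVal_prod_X_sub_C v _)
    _ ≤ gaussVal v f := by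
        conv_rhs => rw [hf']
        exact gaussVal_add_le_gaussVal_mul v _ _

theorem exists_map_eval_eq_gaussVal [IsAlgClosed K] (g : K[X]) :
    ∃ t, 0 ≤ v t ∧ v (g.eval t) = gaussVal v g :=
  let ⟨t, ht, hroots⟩ := exists_nonneg_map_sub_eq_min v g.roots
  ⟨t, ht, map_eval_eq_gaussVal v (IsAlgClosed.splits g) ht hroots⟩

theorem gaussVal_mul [IsAlgClosed K] (f g : K[X]) :
    gaussVal v (f * g) = gaussVal v f + gaussVal v g := by
  obtain ⟨t, ht, hroots⟩ := exists_nonneg_map_sub_eq_min v (f.roots + g.roots)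
  refine le_antisymm ?_ (gaussVal_add_le_gaussVal_mul v f g)
  calc gaussVal v (f * g) ≤ v ((f * g).eval t) := gaussVal_le_map_eval v _ ht
    _ = gaussVal v f + gaussVal v g := by
      rw [eval_mul, v.map_mul,
        map_eval_eq_gaussVal v (IsAlgClosed.splits f) ht fun r hr =>
          hroots r (Multiset.mem_add.2 (.inl hr)),
        map_eval_eq_gaussVal v (IsAlgClosed.splits g) ht fun r hr =>
          hroots r (Multiset.mem_add.2 (.inr hr))]

theorem isValAdd_gaussVal [IsAlgClosed K] : IsValAdd (gaussVal v) where
  map_mul := gaussVal_mul v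
  map_add := min_gaussVal_le_gaussVal_add v
  map_one := gaussVal_one v
  map_zero := gaussVal_zero v
  supp _ := (gaussVal_eq_top_iff v).1

end Field

theorem coeff_comp_C_mul_X_add_C {R : Type*} [CommRing R] (f : R[X]) (a b : R) (i : ℕ) :
    (f.comp (C b * X + C a)).coeff i = (taylor a f).coeff i * b ^ i := by
  rw [show C b * X + C a = (X + C a).comp (C b * X) by simp, ← comp_assoc, ← taylor_apply,
    comp_C_mul_X_coeff]

section PairVal

variable {K Γ : Type*} [Field K] [AddCommGroup Γ] [LinearOrder Γ] [IsOrderedAddMonoid Γ]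
  (v : AddValuation K (WithTop Γ))

theorem le_pairVal_iff {a : K} {δ : Γ} {f : K[X]} {γ : WithTop Γ} :
    γ ≤ pairVal v a δ f ↔ ∀ i, γ ≤ v ((taylor a f).coeff i) + ((i • δ : Γ) : WithTop Γ) := by
  simp only [pairVal, Finset.le_inf_iff, Finset.mem_range]
  refine ⟨fun h i => ?_, fun h i _ => h i⟩
  by_cases hi : i < f.natDegree + 1
  · exact h i hi
  · rw [coeff_eq_zero_of_natDegree_lt (by rw [natDegree_taylor]; omega), v.map_zero, top_add]
    exact le_top

theorem pairVal_eq_gaussVal_comp {a b : K} {δ : Γ} (hb : v b = δ) (f : K[X]) :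
    pairVal v a δ f = gaussVal v (f.comp (C b * X + C a)) :=
  eq_of_forall_le_iff fun γ => by
    simp only [le_pairVal_iff, le_gaussVal_iff, coeff_comp_C_mul_X_add_C, v.map_mul, v.map_pow, hb,
      WithTop.coe_nsmul]

theorem compRingHom_C_mul_X_add_C_injective {b : K} (hb : b ≠ 0) (a : K) :
    Function.Injective (compRingHom (C b * X + C a)) :=
  (injective_iff_map_eq_zero _).2 fun f hf => taylor_injective a <| ext fun i => by
    simpa [coeff_comp_C_mul_X_add_C, hb] using congrArg (coeff · i) hf

theorem coe_le_map_mul_iff {b t : K} {δ : Γ} (hb : v b = δ) :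
    (δ : WithTop Γ) ≤ v (b * t) ↔ 0 ≤ v t := by
  rw [v.map_mul, hb]
  simpa using WithTop.add_le_add_iff_left (y := 0) (z := v t) (WithTop.coe_ne_top (a := δ))

end PairVal

/-- on a closed ball `D(a,δ)` in an algebraically closed valued field, the
minimum `min_{x ∈ D} ν̄(f(x))` exists and equals `min_i (ν̄(∂ᵢf(a)) + i·δ)` (which is
`pairVal ν a δ f`, as `(taylor a f).coeff i = (∂ᵢ f)(a)`); in particular
`f ↦ min_{x ∈ D} ν̄(f(x))` is a valuation coinciding with `ν̄_{a,δ}`. -/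
theorem ball_min_exists {L Γ : Type*} [Field L] [IsAlgClosed L] [AddCommGroup Γ] [LinearOrder Γ] [IsOrderedAddMonoid Γ]
    (ν : L → WithTop Γ) (hν : IsValAdd ν) (a : L) (δ : Γ)
    (hδ : ∃ b : L, b ≠ 0 ∧ ν b = (δ : WithTop Γ)) (f : Polynomial L) :
    (∀ x : L, (δ : WithTop Γ) ≤ ν (x - a) → pairVal ν a δ f ≤ ν (f.eval x)) ∧
      (∃ x : L, (δ : WithTop Γ) ≤ ν (x - a) ∧ ν (f.eval x) = pairVal ν a δ f) ∧
      IsValAdd (pairVal ν a δ) := by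
  obtain ⟨v, rfl⟩ := hν.exists_addValuation
  obtain ⟨b, hb0, hb⟩ := hδ
  have hpair : pairVal v a δ = gaussVal v ∘ compRingHom (C b * X + C a) :=
    funext (pairVal_eq_gaussVal_comp v hb)
  have heval : ∀ t, (f.comp (C b * X + C a)).eval t = f.eval (b * t + a) := by simp
  refine ⟨fun x hx => ?_, ?_, ?_⟩
  · have hx' : b * ((x - a) / b) + a = x := by field_simp; ring
    rw [← hx', add_sub_cancel_right, coe_le_map_mul_iff v hb] at hx
    rw [pairVal_eq_gaussVal_comp v hb, ← hx', ← heval]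
    exact gaussVal_le_map_eval v _ hx
  · obtain ⟨t, ht, hft⟩ := exists_map_eval_eq_gaussVal v (f.comp (C b * X + C a))
    refine ⟨b * t + a, ?_, ?_⟩
    · rwa [add_sub_cancel_right, coe_le_map_mul_iff v hb]
    · rw [← heval, hft, pairVal_eq_gaussVal_comp v hb]
  · rw [hpair]
    exact (isValAdd_gaussVal v).comp_injective _ (compRingHom_C_mul_X_add_C_injective hb0 a)
end

section
/- Let (K̄, ν̄) be an algebraically closed valued field, f ∈ K̄[X] nonconstant, a ∈ K̄ a root of f, and ρ ∈ Φ(ν̄). Then the set {λ ∈ Φ(ν̄) : D(a, λ) ⊆ D̃(f, ρ)} has a minimum, given explicitly by ε(a; f, ρ) = max_{1 ≤ i ≤ deg f} (ρ − ν̄(∂_i f(a)))/i. -/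
/-! A closed ball `D(a, λ)` lies in the diskoid `D̃(f, ρ)` iff every term `∂ᵢf(a) (x - a)ⁱ` of the
Taylor expansion has valuation `≥ ρ` on the ball, i.e. iff `ρ ≤ i λ + ν(∂ᵢf(a))` for all `i ≥ 1`:
sufficiency is the ultrametric inequality, and for necessity one rescales the Taylor expansion to
the unit ball, where, `K̄` being algebraically closed, some integral point `t` makes the valuation
of the polynomial as small as that of each of its coefficients. The least such `λ` is the
largest of the slopes `(ρ - ν(∂ᵢf(a)))/i`, which lie in the value group because `K̄` has all
`i`-th roots. -/

open Polynomial

def IsValAdd.toAddValuation {R Γ : Type*} [CommRing R] [AddCommGroup Γ] [LinearOrder Γ]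
    [IsOrderedAddMonoid Γ] {ν : R → WithTop Γ} (hν : IsValAdd ν) : AddValuation R (WithTop Γ) :=
  AddValuation.of ν hν.map_zero hν.map_one hν.map_add hν.map_mul

namespace AddValuation

variable {R K Γ₀ : Type*} [LinearOrderedAddCommMonoidWithTop Γ₀]

section CommRing

variable [CommRing R] (v : AddValuation R Γ₀)

theorem map_multiset_prod_s14 (s : Multiset R) : v s.prod = (s.map v).sum := by
  induction s using Multiset.induction with
  | empty => simp [v.map_one]
  | cons r s ih => simp [v.map_mul, ih]

theorem map_prod {ι : Type*} (s : Finset ι) (g : ι → R) :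
    v (∏ i ∈ s, g i) = ∑ i ∈ s, v (g i) := by
  simpa [Multiset.map_map] using v.map_multiset_prod_s14 (s.val.map g)

theorem le_map_coeff_C_mul_prod_X_sub_C (c : R) (s : Multiset R) (i : ℕ) :
    v c + (s.map fun r => min 0 (v r)).sum ≤ v ((C c * (s.map fun r => X - C r).prod).coeff i) := by
  induction s using Multiset.induction generalizing i with
  | empty => rcases eq_or_ne i 0 with rfl | hi <;> simp [coeff_C, *, v.map_zero]
  | cons r s ih =>
    set q := C c * (s.map fun r => X - C r).prod
    have hsplit : C c * ((X - C r) * (s.map fun r => X - C r).prod) = q * X - C r * q := by ring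
    simp only [Multiset.map_cons, Multiset.prod_cons, Multiset.sum_cons]
    rw [add_left_comm, hsplit, coeff_sub, coeff_C_mul]
    refine v.map_le_sub ?_ (by rw [v.map_mul]; exact add_le_add (min_le_right _ _) (ih i))
    cases i with
    | zero => simp [v.map_zero]
    | succ j => rw [coeff_mul_X]; exact add_le_of_nonpos_left (min_le_left _ _) |>.trans (ih j)

end CommRing

section AlgClosed

variable [Field K] [IsAlgClosed K] (v : AddValuation K Γ₀)

/-- `t` stands in for a residue class avoiding the residues of `s`: a root of `∏ (X - r) - 1`. -/
theorem exists_map_sub_eq_zero (s : Finset K) (hs : ∀ r ∈ s, 0 ≤ v r) :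
    ∃ t, 0 ≤ v t ∧ ∀ r ∈ s, v (t - r) = 0 := by
  classical
  rcases s.eq_empty_or_nonempty with rfl | ⟨r₀, hr₀⟩
  · exact ⟨0, by simp, by simp⟩
  obtain ⟨t, ht⟩ : ∃ t, ∏ r ∈ s, (t - r) = 1 := by
    have hdeg : (∏ r ∈ s, (X - C r) - 1 : K[X]).degree ≠ 0 := by
      rw [degree_sub_eq_left_of_degree_lt] <;>
        simp [degree_prod, Finset.card_pos.mpr ⟨r₀, hr₀⟩, Finset.card_ne_zero_of_mem hr₀]
    obtain ⟨t, ht⟩ := IsAlgClosed.exists_root _ hdeg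
    exact ⟨t, by simpa [sub_eq_zero, eval_prod] using ht⟩
  have hsum : ∑ r ∈ s, v (t - r) = 0 := by rw [← v.map_prod, ht, v.map_one]
  have ht0 : 0 ≤ v t := by
    by_contra! hneg
    have hval : ∀ r ∈ s, v (t - r) = v t := fun r hr =>
      v.map_sub_eq_of_lt_left (hneg.trans_le (hs r hr))
    have hrest : ∑ r ∈ s.erase r₀, v (t - r) ≤ 0 :=
      Finset.sum_nonpos fun r hr => (hval r (Finset.mem_of_mem_erase hr)).trans_le hneg.le
    have : ∑ r ∈ s, v (t - r) < 0 := calc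
      _ = v (t - r₀) + ∑ r ∈ s.erase r₀, v (t - r) := (s.add_sum_erase _ hr₀).symm
      _ ≤ v t := (add_le_of_nonpos_right hrest).trans_eq (hval r₀ hr₀)
      _ < 0 := hneg
    exact this.ne hsum
  have hnonneg : ∀ r ∈ s, 0 ≤ v (t - r) := fun r hr => v.map_le_sub ht0 (hs r hr)
  exact ⟨t, ht0, (Finset.sum_eq_zero_iff_of_nonneg hnonneg).mp hsum⟩

theorem exists_map_sub_eq_min (s : Finset K) :
    ∃ t, 0 ≤ v t ∧ ∀ r ∈ s, v (t - r) = min 0 (v r) := by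
  classical
  obtain ⟨t, ht0, ht⟩ :=
    v.exists_map_sub_eq_zero (s.filter (0 ≤ v ·)) fun r hr => (Finset.mem_filter.mp hr).2
  refine ⟨t, ht0, fun r hr => ?_⟩
  by_cases h : 0 ≤ v r
  · rw [ht r (Finset.mem_filter.mpr ⟨hr, h⟩), min_eq_left h]
  · rw [v.map_sub_eq_of_lt_right ((not_le.mp h).trans_le ht0), min_eq_right (le_of_not_ge h)]

theorem exists_map_eval_le_map_coeff (g : K[X]) :
    ∃ t, 0 ≤ v t ∧ ∀ i, v (g.eval t) ≤ v (g.coeff i) := by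
  classical
  obtain ⟨t, ht0, ht⟩ := v.exists_map_sub_eq_min g.roots.toFinset
  have hg := (IsAlgClosed.splits g).eq_prod_roots
  refine ⟨t, ht0, fun i => ?_⟩
  calc v (g.eval t) = v g.leadingCoeff + (g.roots.map fun r => min 0 (v r)).sum := by
        conv_lhs => rw [hg]
        rw [eval_mul, eval_C, eval_multiset_prod, v.map_mul, v.map_multiset_prod_s14, Multiset.map_map,
          Multiset.map_map]
        congr 2
        exact Multiset.map_congr rfl fun r hr => by simpa using ht r (Multiset.mem_toFinset.mpr hr)
    _ ≤ v (g.coeff i) := by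
        conv_rhs => rw [hg]
        exact v.le_map_coeff_C_mul_prod_X_sub_C _ _ i

end AlgClosed

section ValueGroup

variable {L Γ : Type*} [Field L] [IsAlgClosed L] [AddCommGroup Γ] [LinearOrder Γ]
  [IsOrderedAddMonoid Γ] (v : AddValuation L (WithTop Γ))

theorem exists_ne_zero_map_eq_nsmul_add {b c : L} (hb : b ≠ 0) (hc : c ≠ 0) {n : ℕ} (hn : 0 < n) :
    ∃ u, u ≠ 0 ∧ v b = n • v u + v c := by
  obtain ⟨u, hu⟩ := IsAlgClosed.exists_pow_nat_eq (b / c) hn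
  refine ⟨u, ?_, ?_⟩
  · rintro rfl
    rw [zero_pow hn.ne'] at hu
    exact div_ne_zero hb hc hu.symm
  · rw [← v.map_pow, ← v.map_mul, hu, div_mul_cancel₀ b hc]

/-- `ε₀` is `max_{i ≥ 1} (ρ - v(pᵢ))/i`, in division-free form. -/
theorem exists_critical_radius (p : L[X]) (hp : 0 < p.natDegree) {b : L} {ρ : Γ} (hb : v b = ρ) :
    ∃ ε₀ : Γ, (∃ u : L, u ≠ 0 ∧ v u = ε₀) ∧
      (∀ i, 1 ≤ i → (ρ : WithTop Γ) ≤ ↑(i • ε₀) + v (p.coeff i)) ∧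
      ∃ i, 1 ≤ i ∧ (ρ : WithTop Γ) = ↑(i • ε₀) + v (p.coeff i) := by
  classical
  have hb0 : b ≠ 0 := by
    rintro rfl
    simp [v.map_zero] at hb
  have hslope : ∀ i, 1 ≤ i → p.coeff i ≠ 0 → ∃ ε : Γ, (∃ u : L, u ≠ 0 ∧ v u = ε) ∧
      (ρ : WithTop Γ) = ↑(i • ε) + v (p.coeff i) := by
    intro i hi hc
    obtain ⟨u, hu0, hu⟩ := v.exists_ne_zero_map_eq_nsmul_add hb0 hc hi
    obtain ⟨ε, hε⟩ := WithTop.ne_top_iff_exists.mp (v.ne_top_iff.mpr hu0)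
    exact ⟨ε, ⟨u, hu0, hε.symm⟩, by rw [← hb, hu, ← hε]; rfl⟩
  choose! ε hε using hslope
  set S := (Finset.Icc 1 p.natDegree).filter (p.coeff · ≠ 0)
  have hS : ∀ {i}, i ∈ S ↔ 1 ≤ i ∧ p.coeff i ≠ 0 := fun {i} => by
    simpa [S, and_assoc] using fun _ hc => le_natDegree_of_ne_zero hc
  obtain ⟨i₀, hi₀, hmax⟩ := S.exists_max_image ε
    ⟨_, hS.mpr ⟨hp, leadingCoeff_ne_zero.mpr (ne_zero_of_natDegree_gt hp)⟩⟩
  obtain ⟨hi₀1, hc₀⟩ := hS.mp hi₀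
  refine ⟨ε i₀, (hε i₀ hi₀1 hc₀).1, fun i hi => ?_, i₀, hi₀1, (hε i₀ hi₀1 hc₀).2⟩
  by_cases hc : p.coeff i = 0
  · simp [hc, v.map_zero]
  · rw [(hε i hi hc).2]
    exact add_le_add_left (WithTop.coe_le_coe.mpr
      (nsmul_le_nsmul_right (hmax i (hS.mpr ⟨hi, hc⟩)) i)) _

end ValueGroup

end AddValuation

section Diskoid

variable {R L Γ : Type*} [AddCommGroup Γ] [LinearOrder Γ] [IsOrderedAddMonoid Γ]

def valBall [Ring R] (v : AddValuation R (WithTop Γ)) (a : R) (lam : Γ) : Set R :=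
  {x | (lam : WithTop Γ) ≤ v (x - a)}

def diskoid [Ring R] (v : AddValuation R (WithTop Γ)) (f : R[X]) (ρ : Γ) : Set R :=
  {x | (ρ : WithTop Γ) ≤ v (f.eval x)}

theorem valBall_subset_diskoid_of_le [CommRing R] (v : AddValuation R (WithTop Γ)) {f : R[X]}
    {a : R} (ha : f.eval a = 0) {lam ρ : Γ}
    (h : ∀ i, 1 ≤ i → (ρ : WithTop Γ) ≤ ↑(i • lam) + v ((hasseDeriv i f).eval a)) :
    valBall v a lam ⊆ diskoid v f ρ := by
  intro x hx
  rw [diskoid, Set.mem_ofPred_eq, ← taylor_eval_sub a, eval_eq_sum_range]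
  refine v.map_le_sum fun i _ => ?_
  rcases i.eq_zero_or_pos with rfl | hi
  · simp [taylor_coeff_zero, ha, v.map_zero]
  · rw [v.map_mul, v.map_pow, taylor_coeff, add_comm]
    exact (h i hi).trans
      (add_le_add_left ((WithTop.coe_nsmul lam i).trans_le (nsmul_le_nsmul_right hx i)) _)

theorem le_of_valBall_subset_diskoid [Field L] [IsAlgClosed L] (v : AddValuation L (WithTop Γ))
    {f : L[X]} {a b : L} {lam ρ : Γ} (hb : v b = lam) (h : valBall v a lam ⊆ diskoid v f ρ)
    (i : ℕ) : (ρ : WithTop Γ) ≤ ↑(i • lam) + v ((hasseDeriv i f).eval a) := by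
  set g := (taylor a f).comp (C b * X)
  obtain ⟨t, ht0, ht⟩ := v.exists_map_eval_le_map_coeff g
  have hx : a + b * t ∈ valBall v a lam := by
    rw [valBall, Set.mem_ofPred_eq, add_sub_cancel_left, v.map_mul, hb]
    exact le_add_of_nonneg_right ht0
  calc (ρ : WithTop Γ) ≤ v (f.eval (a + b * t)) := h hx
    _ = v (g.eval t) := by rw [eval_comp, eval_mul, eval_C, eval_X, ← taylor_eval_sub a,
          add_sub_cancel_left]
    _ ≤ v (g.coeff i) := ht i
    _ = ↑(i • lam) + v ((hasseDeriv i f).eval a) := by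
          rw [comp_C_mul_X_coeff, v.map_mul, v.map_pow, hb, taylor_coeff, add_comm]; rfl

theorem valBall_subset_diskoid_iff [Field L] [IsAlgClosed L] (v : AddValuation L (WithTop Γ))
    {f : L[X]} {a b : L} (ha : f.eval a = 0) {lam ρ : Γ} (hb : v b = lam) :
    valBall v a lam ⊆ diskoid v f ρ ↔
      ∀ i, 1 ≤ i → (ρ : WithTop Γ) ≤ ↑(i • lam) + v ((hasseDeriv i f).eval a) :=
  ⟨fun h i _ => le_of_valBall_subset_diskoid v hb h i, valBall_subset_diskoid_of_le v ha⟩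

end Diskoid

theorem le_iff_forall_le_nsmul_add {Γ : Type*} [AddCommGroup Γ] [LinearOrder Γ]
    [IsOrderedAddMonoid Γ] {ε₀ ρ : Γ} {c : ℕ → WithTop Γ}
    (hle : ∀ i, 1 ≤ i → (ρ : WithTop Γ) ≤ ↑(i • ε₀) + c i)
    (heq : ∃ i, 1 ≤ i ∧ (ρ : WithTop Γ) = ↑(i • ε₀) + c i) (lam : Γ) :
    (∀ i, 1 ≤ i → (ρ : WithTop Γ) ≤ ↑(i • lam) + c i) ↔ ε₀ ≤ lam := by
  obtain ⟨i₀, hi₀, hρ⟩ := heq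
  refine ⟨fun h => ?_, fun hlam i hi => (hle i hi).trans
    (add_le_add_left (WithTop.coe_le_coe.mpr (nsmul_le_nsmul_right hlam i)) _)⟩
  have hc : c i₀ ≠ ⊤ := by
    rintro htop
    simp [htop] at hρ
  obtain ⟨γ, hγ⟩ := WithTop.ne_top_iff_exists.mp hc
  have h₀ := h i₀ hi₀
  rw [hρ, ← hγ, ← WithTop.coe_add, ← WithTop.coe_add, WithTop.coe_le_coe] at h₀
  exact (nsmul_le_nsmul_iff_right (Nat.one_le_iff_ne_zero.mp hi₀)).mp (le_of_add_le_add_right h₀)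

/-- the set `{λ ∈ Φ(ν̄) : D(a,λ) ⊆ D̃(f,ρ)}` has a minimum
`ε₀ = ε(a; f, ρ) = max_{i ≥ 1} (ρ − ν̄(∂ᵢ f(a)))/i` (the max is expressed in
cross-multiplied, division-free form), which moreover lies in the value group. -/
theorem diskoid_ball_radius {L Γ : Type*} [Field L] [IsAlgClosed L]
    [AddCommGroup Γ] [LinearOrder Γ] [IsOrderedAddMonoid Γ]
    (ν : L → WithTop Γ) (hν : IsValAdd ν)
    (f : Polynomial L) (hfdeg : 0 < f.natDegree)
    (a : L) (ha : f.eval a = 0)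
    (ρ : Γ) (hρ : ∃ b : L, b ≠ 0 ∧ ν b = (ρ : WithTop Γ)) :
    ∃ ε₀ : Γ,
      (∃ b : L, b ≠ 0 ∧ ν b = (ε₀ : WithTop Γ)) ∧
      (∀ lam : Γ, (∃ b : L, b ≠ 0 ∧ ν b = (lam : WithTop Γ)) →
        ((∀ x : L, (lam : WithTop Γ) ≤ ν (x - a) → (ρ : WithTop Γ) ≤ ν (f.eval x)) ↔
          ε₀ ≤ lam)) ∧
      (∀ i, 1 ≤ i →
        (ρ : WithTop Γ) ≤ ((i • ε₀ : Γ) : WithTop Γ) + ν ((Polynomial.hasseDeriv i f).eval a)) ∧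
      (∃ i, 1 ≤ i ∧
        (ρ : WithTop Γ) = ((i • ε₀ : Γ) : WithTop Γ) + ν ((Polynomial.hasseDeriv i f).eval a)) := by
  let v : AddValuation L (WithTop Γ) := hν.toAddValuation
  obtain ⟨b, -, hb⟩ := hρ
  obtain ⟨ε₀, hε₀, hle, heq⟩ :=
    v.exists_critical_radius (taylor a f) (by rwa [natDegree_taylor]) hb
  simp only [taylor_coeff] at hle heq
  exact ⟨ε₀, hε₀, fun lam ⟨b', _, hb'⟩ => (valBall_subset_diskoid_iff v ha hb').trans
    (le_iff_forall_le_nsmul_add hle heq lam), hle, heq⟩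
end

section
/- Let (K̄, ν̄) be an algebraically closed valued field, f ∈ K̄[X] nonconstant, and ρ ∈ Φ(ν̄). Then the diskoid D̃(f, ρ) = {x ∈ K̄ : ν̄(f(x)) ≥ ρ} is the finite union of closed balls ⋃_{c : f(c)=0} D(c, ε(c; f, ρ)), where ε(c; f, ρ) = max_{i ≥ 1} (ρ − ν̄(∂_i f(c)))/i. -/
open Polynomial

/-! If `x` lies in `D(c, ε c)` for a root `c`, every term of the Taylor expansion of `f` at `c`,
evaluated at `x - c`, has value at least `ρ`.

Conversely, let `c` be a root of `f` nearest to `x`. Then `ν (x - r) = min (ν (x - c)) (ν (r - c))`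
for every root `r`, and Vieta's formulas for the expansion of `f` at `c` show that evaluating
at `x` causes no cancellation: `ν (f x) ≤ ν (∂ᵢ f (c)) + i • ν (x - c)` for every `i`. If
`ν (x - c) < ε c`, the index `i` at which `ε c` is attained gives `ν (f x) < ρ`. -/

namespace AddValuation

variable {R Γ₀ : Type*} [CommRing R] [LinearOrderedAddCommMonoidWithTop Γ₀]
  (v : AddValuation R Γ₀)

theorem map_multiset_prod_s15 (m : Multiset R) : v m.prod = (m.map v).sum := by
  induction m using Multiset.induction with
  | empty => simp
  | cons a m ih => simp [v.map_mul, ih]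

theorem le_map_multiset_sum {m : Multiset R} {g : Γ₀} (h : ∀ z ∈ m, g ≤ v z) :
    g ≤ v m.sum := by
  induction m using Multiset.induction with
  | empty => simp
  | cons a m ih =>
    rw [Multiset.sum_cons]
    exact v.map_le_add (h a (Multiset.mem_cons_self ..))
      (ih fun z hz => h z (Multiset.mem_cons_of_mem hz))

theorem map_sub_eq_min_of_le {y d : R} (h : v (y - d) ≤ v y) :
    v (y - d) = min (v y) (v d) := by
  rcases le_or_gt (v y) (v d) with hyd | hdy
  · rw [min_eq_left hyd]
    exact le_antisymm h (min_eq_left hyd ▸ v.map_sub y d)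
  · rw [min_eq_right hdy.le, v.map_sub_eq_of_lt_right hdy]

theorem sum_min_le_map_pow_mul_esymm (y : R) (D : Multiset R) (k : ℕ) :
    (D.map fun d => min (v y) (v d)).sum ≤ v (y ^ (Multiset.card D - k) * D.esymm k) := by
  rw [Multiset.esymm, ← Multiset.sum_map_mul_left]
  refine v.le_map_multiset_sum fun z hz => ?_
  obtain ⟨S, hS, rfl⟩ := Multiset.mem_map.mp hz
  obtain ⟨hSD, hSk⟩ := Multiset.mem_powersetCard.mp hS
  obtain ⟨T, rfl⟩ := Multiset.le_iff_exists_add.mp hSD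
  have hT : Multiset.card T = Multiset.card (S + T) - k := by simp [← hSk]
  calc ((S + T).map fun d => min (v y) (v d)).sum
      = (T.map fun d => min (v y) (v d)).sum + (S.map fun d => min (v y) (v d)).sum := by
        rw [Multiset.map_add, Multiset.sum_add, add_comm]
    _ ≤ Multiset.card T • v y + (S.map v).sum := by
        gcongr
        · simpa using Multiset.sum_map_le_sum_map _ (fun _ => v y) fun _ _ => min_le_left _ _
        · exact Multiset.sum_map_le_sum_map _ _ fun _ _ => min_le_right _ _
    _ = v (y ^ (Multiset.card (S + T) - k) * S.prod) := by
        rw [v.map_mul, v.map_pow, v.map_multiset_prod_s15, hT]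

theorem le_map_eval_of_le_map_sub {f : R[X]} {c x : R} (hc : f.IsRoot c) {ρ ε : Γ₀}
    (hρ : ∀ i, 1 ≤ i → ρ ≤ i • ε + v ((hasseDeriv i f).eval c)) (hxc : ε ≤ v (x - c)) :
    ρ ≤ v (f.eval x) := by
  rw [← taylor_eval_sub c, eval_eq_sum_range]
  refine v.map_le_sum fun i _ => ?_
  rcases i.eq_zero_or_pos with rfl | hi
  · simp [hc.eq_zero]
  · calc ρ ≤ i • ε + v ((hasseDeriv i f).eval c) := hρ i hi
      _ ≤ v ((taylor c f).coeff i * (x - c) ^ i) := by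
        rw [v.map_mul, v.map_pow, taylor_coeff, add_comm]
        gcongr

variable [IsDomain R] {g : R[X]}

theorem map_eval_of_splits (hg : g.Splits) (y : R) :
    v (g.eval y) = v g.leadingCoeff + (g.roots.map fun d => v (y - d)).sum := by
  conv_lhs => rw [hg.eq_prod_roots]
  simp [eval_multiset_prod, v.map_mul, v.map_multiset_prod_s15, Multiset.map_map]

theorem map_eval_le_map_coeff_mul_pow (hg : g.Splits) {y : R}
    (hy : ∀ d ∈ g.roots, v (y - d) ≤ v y) (i : ℕ) :
    v (g.eval y) ≤ v (g.coeff i * y ^ i) := by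
  rcases lt_or_ge g.natDegree i with hi | hi
  · simp [coeff_eq_zero_of_natDegree_lt hi]
  have hcard : Multiset.card g.roots = g.natDegree := splits_iff_card_roots.mp hg
  rw [v.map_eval_of_splits hg, Multiset.map_congr rfl fun d hd => v.map_sub_eq_min_of_le (hy d hd),
    coeff_eq_esymm_roots_of_card hcard hi]
  calc v g.leadingCoeff + (g.roots.map fun d => min (v y) (v d)).sum
      ≤ v g.leadingCoeff + v (y ^ (Multiset.card g.roots - (g.natDegree - i)) *
          g.roots.esymm (g.natDegree - i)) := by
        gcongr
        exact v.sum_min_le_map_pow_mul_esymm y _ _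
    _ = v (g.leadingCoeff * (-1) ^ (g.natDegree - i) * g.roots.esymm (g.natDegree - i) * y ^ i) := by
        simp only [hcard, Nat.sub_sub_self hi, v.map_mul, v.map_pow, v.map_neg, v.map_one, nsmul_zero,
          add_zero]
        ac_rfl

end AddValuation

theorem Polynomial.exists_isRoot_forall_le {R α : Type*} [CommRing R] [IsDomain R] [LinearOrder α]
    {f : R[X]} (hf : f ≠ 0) (hroot : ∃ c, f.IsRoot c) (φ : R → α) :
    ∃ c, f.IsRoot c ∧ ∀ r, f.IsRoot r → φ r ≤ φ c := by
  classical
  obtain ⟨c₀, hc₀⟩ := hroot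
  obtain ⟨c, hc, hmax⟩ := f.roots.toFinset.exists_max_image φ
    ⟨c₀, by simpa [mem_roots hf] using hc₀⟩
  exact ⟨c, by simpa [mem_roots hf] using hc, fun r hr => hmax r (by simpa [mem_roots hf] using hr)⟩

theorem AddValuation.exists_root_le_map_sub_of_le_map_eval {L Γ : Type*} [Field L] [IsAlgClosed L]
    [AddCommGroup Γ] [LinearOrder Γ] [IsOrderedAddMonoid Γ]
    (ν : AddValuation L (WithTop Γ)) {f : L[X]} (hf : 0 < f.natDegree) {ρ : Γ} {ε : L → Γ}
    (hε : ∀ c, f.IsRoot c → ∃ i, 1 ≤ i ∧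
      (ρ : WithTop Γ) = ((i • ε c : Γ) : WithTop Γ) + ν ((hasseDeriv i f).eval c))
    {x : L} (hx : (ρ : WithTop Γ) ≤ ν (f.eval x)) :
    ∃ c, f.IsRoot c ∧ (ε c : WithTop Γ) ≤ ν (x - c) := by
  have hf0 : f ≠ 0 := ne_zero_of_natDegree_gt hf
  obtain ⟨c, hc, hnearest⟩ := exists_isRoot_forall_le hf0
    (IsAlgClosed.exists_root f (natDegree_pos_iff_degree_pos.mp hf).ne') (fun r => ν (x - r))
  refine ⟨c, hc, le_of_not_gt fun hfar => ?_⟩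
  obtain ⟨i, hi, hρ⟩ := hε c hc
  have hnearest_taylor : ∀ d ∈ (taylor c f).roots, ν (x - c - d) ≤ ν (x - c) := fun d hd => by
    have : f.IsRoot (d + c) := by
      simpa [taylor_eval] using (mem_roots (by simpa using hf0)).mp hd
    simpa [sub_sub, add_comm] using hnearest _ this
  have hle := ν.map_eval_le_map_coeff_mul_pow (IsAlgClosed.splits _) hnearest_taylor i
  rw [taylor_eval_sub, taylor_coeff, ν.map_mul, ν.map_pow] at hle
  have hfinite : ν ((hasseDeriv i f).eval c) ≠ ⊤ := fun h => by simp [h] at hρ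
  obtain ⟨t, ht⟩ := WithTop.ne_top_iff_exists.mp hfar.ne_top
  have htε : i • t < i • ε c := nsmul_lt_nsmul_right (by omega) (by exact_mod_cast ht ▸ hfar)
  refine (hx.trans hle).not_gt ?_
  rw [hρ, ← ht, add_comm (ν _), ← WithTop.coe_nsmul]
  exact WithTop.add_lt_add_right hfinite (WithTop.coe_lt_coe.mpr htε)

theorem diskoid_decomposition_general {L Γ : Type*} [Field L] [IsAlgClosed L]
    [AddCommGroup Γ] [LinearOrder Γ] [IsOrderedAddMonoid Γ]
    (ν : L → WithTop Γ) (hν : IsValAdd ν)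
    (f : Polynomial L) (hfdeg : 0 < f.natDegree)
    (ρ : Γ)
    (ε : L → Γ)
    (hε : ∀ c : L, f.eval c = 0 →
      (∀ i, 1 ≤ i →
        (ρ : WithTop Γ) ≤ ((i • ε c : Γ) : WithTop Γ) + ν ((Polynomial.hasseDeriv i f).eval c)) ∧
      (∃ i, 1 ≤ i ∧
        (ρ : WithTop Γ) = ((i • ε c : Γ) : WithTop Γ) + ν ((Polynomial.hasseDeriv i f).eval c))) :
    ∀ x : L, (ρ : WithTop Γ) ≤ ν (f.eval x) ↔
      ∃ c : L, f.eval c = 0 ∧ ((ε c : Γ) : WithTop Γ) ≤ ν (x - c) := by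
  obtain ⟨v, rfl⟩ : ∃ v : AddValuation L (WithTop Γ), ⇑v = ν :=
    ⟨AddValuation.of ν hν.map_zero hν.map_one hν.map_add hν.map_mul, rfl⟩
  intro x
  constructor
  · exact v.exists_root_le_map_sub_of_le_map_eval hfdeg fun c hc => (hε c hc).2
  · rintro ⟨c, hc, hxc⟩
    refine v.le_map_eval_of_le_map_sub hc (fun i hi => ?_) hxc
    simpa only [WithTop.coe_nsmul] using (hε c hc).1 i hi

/-- the diskoid `D̃(f,ρ)` is the union of the closed balls
`D(c, ε(c; f, ρ))` over the roots `c` of `f`, where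
`ε(c; f, ρ) = max_{i ≥ 1} (ρ − ν̄(∂ᵢ f(c)))/i` (given here by its division-free
characterisation). -/
theorem diskoid_decomposition {L Γ : Type*} [Field L] [IsAlgClosed L]
    [AddCommGroup Γ] [LinearOrder Γ] [IsOrderedAddMonoid Γ]
    (ν : L → WithTop Γ) (hν : IsValAdd ν)
    (f : Polynomial L) (hfdeg : 0 < f.natDegree)
    (ρ : Γ) (hρ : ∃ b : L, b ≠ 0 ∧ ν b = (ρ : WithTop Γ))
    (ε : L → Γ)
    (hε : ∀ c : L, f.eval c = 0 →
      (∀ i, 1 ≤ i →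
        (ρ : WithTop Γ) ≤ ((i • ε c : Γ) : WithTop Γ) + ν ((Polynomial.hasseDeriv i f).eval c)) ∧
      (∃ i, 1 ≤ i ∧
        (ρ : WithTop Γ) = ((i • ε c : Γ) : WithTop Γ) + ν ((Polynomial.hasseDeriv i f).eval c))) :
    ∀ x : L, (ρ : WithTop Γ) ≤ ν (f.eval x) ↔
      ∃ c : L, f.eval c = 0 ∧ ((ε c : Γ) : WithTop Γ) ≤ ν (x - c) :=
  diskoid_decomposition_general ν hν f hfdeg ρ ε hε
end

section
/- Let L/K be an algebraic field extension. Then restriction to L gives a group isomorphism Aut_{K(X)}(L(X)) ≅ Aut_K(L), where X is transcendental over L. -/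
/-! STATEMENT 18: for an algebraic field extension `L/K`, restriction to `L` gives a group
isomorphism `Aut_{K(X)}(L(X)) ≅ Aut_K(L)`.  We model `K(X)` and `L(X)` as the fraction
fields of the polynomial rings, with `K(X) → L(X)` induced by coefficientwise extension. -/

variable (K L : Type*) [Field K] [Field L] [Algebra K L] [Algebra.IsAlgebraic K L]

/-- The coefficientwise algebra structure of `L[X]` over `K[X]`. -/
noncomputable instance polyMapAlgebra : Algebra (Polynomial K) (Polynomial L) :=
  (Polynomial.mapRingHom (algebraMap K L)).toAlgebra

instance : NoZeroSMulDivisors (Polynomial K) (FractionRing (Polynomial L)) := by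
  suffices hinj : Function.Injective (algebraMap (Polynomial K) (FractionRing (Polynomial L))) from
    ⟨fun {c x} h => by
      rw [Algebra.smul_def, mul_eq_zero] at h
      exact h.imp_left (map_eq_zero_iff _ hinj).mp⟩
  rw [IsScalarTower.algebraMap_eq (Polynomial K) (Polynomial L) (FractionRing (Polynomial L))]
  exact (IsFractionRing.injective (Polynomial L) (FractionRing (Polynomial L))).comp
    (Polynomial.map_injective _ (algebraMap K L).injective)

/-- The induced `K(X)`-algebra structure on `L(X)`. -/
noncomputable instance ratFuncAlgebra :
    Algebra (FractionRing (Polynomial K)) (FractionRing (Polynomial L)) :=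
  FractionRing.liftAlgebra (Polynomial K) (FractionRing (Polynomial L))

/-! A `K(X)`-automorphism `σ` of `L(X)` is `K`-linear, so it sends each `x : L`, which is
integral over `K`, to an element of `L(X)` integral over `L`. As `L[X]` is integrally closed and
non-constant polynomials are transcendental over `L`, such an element is a constant. Hence `σ`
restricts to a `K`-embedding `L → L`, bijective because `L/K` is algebraic, and `σ` is determined
by this restriction because it fixes `X`. Conversely, letting `Aut_K(L)` act on coefficients
gives the inverse map. -/

open Polynomial

theorem Polynomial.mem_range_algebraMap_of_isIntegral {F E : Type*} [Field F] [Field E]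
    [Algebra F[X] E] [IsFractionRing F[X] E] [Algebra F E] [IsScalarTower F F[X] E]
    {z : E} (hz : IsIntegral F z) : z ∈ (algebraMap F E).range := by
  obtain ⟨p, rfl⟩ := IsIntegrallyClosed.isIntegral_iff.mp (hz.tower_top (A := F[X]))
  have hp : IsIntegral F p := (isIntegral_algHom_iff (IsScalarTower.toAlgHom F F[X] E)
    (IsFractionRing.injective F[X] E)).mp hz
  have hdeg : p.natDegree = 0 := by
    by_contra hne
    have hp0 : p ≠ 0 := by rintro rfl; exact hne natDegree_zero
    exact p.transcendental hne
      (mem_nonZeroDivisors_of_ne_zero (leadingCoeff_ne_zero.mpr hp0)) hp.isAlgebraic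
  obtain ⟨c, rfl⟩ := natDegree_eq_zero.mp hdeg
  exact ⟨c, IsScalarTower.algebraMap_apply F F[X] E c⟩

section

variable {K L}

theorem algebraMap_fractionRing_polynomial_apply (p : K[X]) :
    algebraMap (FractionRing K[X]) (FractionRing L[X]) (algebraMap K[X] _ p) =
      algebraMap L[X] (FractionRing L[X]) (p.map (algebraMap K L)) := by
  rw [← IsScalarTower.algebraMap_apply, IsScalarTower.algebraMap_apply K[X] L[X]]
  rfl

instance : IsScalarTower K (FractionRing K[X]) (FractionRing L[X]) :=
  IsScalarTower.of_algebraMap_eq fun c => by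
    rw [IsScalarTower.algebraMap_apply K K[X] (FractionRing K[X]),
      algebraMap_fractionRing_polynomial_apply, IsScalarTower.algebraMap_apply K L[X]]
    simp

theorem ratFuncAut_algebraMap_mem_range
    (σ : FractionRing L[X] ≃ₐ[FractionRing K[X]] FractionRing L[X]) (x : L) :
    σ (algebraMap L _ x) ∈ (algebraMap L (FractionRing L[X])).range :=
  Polynomial.mem_range_algebraMap_of_isIntegral <|
    ((Algebra.IsIntegral.isIntegral (R := K) x).map ((σ.toAlgHom.restrictScalars K).comp
      (IsScalarTower.toAlgHom K L (FractionRing L[X])))).tower_top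

theorem ratFuncAut_ext {σ σ' : FractionRing L[X] ≃ₐ[FractionRing K[X]] FractionRing L[X]}
    (h : ∀ x : L, σ (algebraMap L _ x) = σ' (algebraMap L _ x)) : σ = σ' := by
  have fix_X : ∀ τ : FractionRing L[X] ≃ₐ[FractionRing K[X]] FractionRing L[X],
      τ (algebraMap L[X] _ X) = algebraMap L[X] _ X := fun τ => by
    rw [← map_X (algebraMap K L), ← algebraMap_fractionRing_polynomial_apply, τ.commutes]
  have agree_on_polynomials :
      (σ : FractionRing L[X] →+* FractionRing L[X]).comp (algebraMap L[X] _) =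
        (σ' : FractionRing L[X] →+* FractionRing L[X]).comp (algebraMap L[X] _) := by
    refine Polynomial.ringHom_ext (fun a => ?_) (by simp [fix_X])
    simpa [IsScalarTower.algebraMap_apply L L[X] (FractionRing L[X])] using h a
  ext z
  obtain ⟨p, q, -, rfl⟩ := IsFractionRing.div_surjective L[X] z
  rw [map_div₀, map_div₀]
  exact congr_arg₂ (· / ·) (RingHom.congr_fun agree_on_polynomials p)
    (RingHom.congr_fun agree_on_polynomials q)

noncomputable def polynomialMapAut : (L ≃ₐ[K] L) →* (L[X] ≃ₐ[K[X]] L[X]) where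
  toFun τ := AlgEquiv.ofRingEquiv (f := mapEquiv τ.toRingEquiv) fun q => by
    change (q.map (algebraMap K L)).map (τ : L →+* L) = q.map (algebraMap K L)
    rw [map_map]
    exact congrArg (q.map ·) (RingHom.ext τ.commutes)
  map_one' := by ext; simp
  map_mul' τ τ' := by ext; simp

noncomputable def ratFuncLiftAut :
    (L ≃ₐ[K] L) →* (FractionRing L[X] ≃ₐ[FractionRing K[X]] FractionRing L[X]) :=
  (IsFractionRing.fieldEquivOfAlgEquivHom _ _).comp polynomialMapAut

theorem ratFuncLiftAut_algebraMap (τ : L ≃ₐ[K] L) (x : L) :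
    ratFuncLiftAut τ (algebraMap L (FractionRing L[X]) x) = algebraMap L _ (τ x) := by
  simp [ratFuncLiftAut, polynomialMapAut,
    IsScalarTower.algebraMap_apply L L[X] (FractionRing L[X])]

theorem ratFuncLiftAut_injective : Function.Injective (ratFuncLiftAut (K := K) (L := L)) :=
  fun τ τ' h => AlgEquiv.ext fun x => (algebraMap L (FractionRing L[X])).injective <| by
    rw [← ratFuncLiftAut_algebraMap, ← ratFuncLiftAut_algebraMap, h]

noncomputable def ratFuncRestrictAut
    (σ : FractionRing L[X] ≃ₐ[FractionRing K[X]] FractionRing L[X]) : L ≃ₐ[K] L :=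
  let ι := IsScalarTower.toAlgHom K L (FractionRing L[X])
  AlgEquiv.ofBijective (((AlgEquiv.ofInjectiveField ι).symm : ι.range →ₐ[K] L).comp
    (((σ.toAlgHom.restrictScalars K).comp ι).codRestrict ι.range
      (ratFuncAut_algebraMap_mem_range σ)))
    (Algebra.IsAlgebraic.algHom_bijective _)

theorem algebraMap_ratFuncRestrictAut
    (σ : FractionRing L[X] ≃ₐ[FractionRing K[X]] FractionRing L[X]) (x : L) :
    algebraMap L _ (ratFuncRestrictAut σ x) = σ (algebraMap L _ x) :=
  congrArg Subtype.val <|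
    (AlgEquiv.ofInjectiveField (IsScalarTower.toAlgHom K L (FractionRing L[X]))).apply_symm_apply _

theorem ratFuncLiftAut_ratFuncRestrictAut
    (σ : FractionRing L[X] ≃ₐ[FractionRing K[X]] FractionRing L[X]) :
    ratFuncLiftAut (ratFuncRestrictAut σ) = σ :=
  ratFuncAut_ext fun x => by rw [ratFuncLiftAut_algebraMap, algebraMap_ratFuncRestrictAut]

end

/-- restriction to `L` gives a group isomorphism
`Aut_{K(X)}(L(X)) ≅ Aut_K(L)`. -/
theorem aut_ratFunc_equiv_aut :
    ∃ e : (FractionRing (Polynomial L) ≃ₐ[FractionRing (Polynomial K)]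
            FractionRing (Polynomial L)) ≃* (L ≃ₐ[K] L),
      ∀ (σ : FractionRing (Polynomial L) ≃ₐ[FractionRing (Polynomial K)]
            FractionRing (Polynomial L)) (x : L),
        algebraMap L (FractionRing (Polynomial L)) (e σ x) =
          σ (algebraMap L (FractionRing (Polynomial L)) x) := by
  have bijective : Function.Bijective (ratFuncLiftAut (K := K) (L := L)) :=
    ⟨ratFuncLiftAut_injective,
      fun σ => ⟨ratFuncRestrictAut σ, ratFuncLiftAut_ratFuncRestrictAut σ⟩⟩
  refine ⟨(MulEquiv.ofBijective _ bijective).symm, fun σ x => ?_⟩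
  conv_rhs => rw [← (MulEquiv.ofBijective _ bijective).apply_symm_apply σ]
  exact (ratFuncLiftAut_algebraMap _ x).symm
end
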